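/- arXiv:1709.01028 — 4 statements merged into one kernel-verified Lean document; each statement's English description precedes it below -/
import Mathlib

section
/- Let D ⊆ ℂ be a bounded domain, and let F : closure(D) → ℂ² \ {0} be a continuous injective map such that σ ∘ F is injective on each sufficiently small subset in the following sense: the set Δ' = {(z,w) ∈ closure(D)² : z ≠ w, σ(F(z)) = σ(F(w))} is compact, where σ : ℂ²\{0} → ℙ¹(ℂ) is the canonical projection. Set c = sup{|F(z)| : z ∈ closure(D)} and δ = inf{|F(z) − F(w)| : (z,w) ∈ Δ'} (with δ > 0 since F is injective and Δ' is compact). If h : D → ℂ is a bounded function with sup|h| < μ where μ > 0 is chosen so that |e^ζ − 1| < δ/(3c) whenever |ζ| < μ, then the map z ↦ e^{−h(z)}·F(z) is injective on D. -/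
open Complex Metric Set

/-- If `F : closure D → ℂ² \ {0}` is continuous and injective, the set `Δ'` of distinct
pairs with proportional `F`-values (equal projections to `ℙ¹`) is compact, `c` bounds
`‖F‖`, `δ > 0` bounds `‖F z − F w‖` from below on `Δ'`, and `|e^ζ − 1| < δ/(3c)` for
`|ζ| < μ`, then for any `h` with `sup |h| < μ` the map `e^{−h} F` is injective on `D`. -/
theorem stmt_7 (D : Set ℂ) (hD : IsOpen D) (hDc : IsConnected D)
    (hDb : Bornology.IsBounded D)
    (F : ℂ → EuclideanSpace ℂ (Fin 2))
    (hFc : ContinuousOn F (closure D))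
    (hF0 : ∀ z ∈ closure D, F z ≠ 0)
    (hFinj : InjOn F (closure D))
    (hΔ : IsCompact {p : ℂ × ℂ | p.1 ∈ closure D ∧ p.2 ∈ closure D ∧ p.1 ≠ p.2 ∧
      ∃ c : ℂ, F p.2 = c • F p.1})
    (c δ μ : ℝ) (hc : 0 < c)
    (hcF : ∀ z ∈ closure D, ‖F z‖ ≤ c)
    (hδ : 0 < δ)
    (hδF : ∀ p : ℂ × ℂ, p.1 ∈ closure D → p.2 ∈ closure D → p.1 ≠ p.2 →
      (∃ c : ℂ, F p.2 = c • F p.1) → δ ≤ ‖F p.1 - F p.2‖)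
    (hμ : 0 < μ)
    (hμδ : ∀ ζ : ℂ, ‖ζ‖ < μ → ‖Complex.exp ζ - 1‖ < δ / (3 * c))
    (h : ℂ → ℂ) (hh : ∀ z ∈ D, ‖h z‖ < μ) :
    InjOn (fun z : ℂ => Complex.exp (-h z) • F z) D := by
  intro z hz w hw heq
  by_contra hne
  have hzc : z ∈ closure D := subset_closure hz
  have hwc : w ∈ closure D := subset_closure hw
  have hprop : ∃ k : ℂ, F w = k • F z := by
    refine ⟨Complex.exp (-h z) / Complex.exp (-h w), ?_⟩
    have : Complex.exp (-h z) • F z = Complex.exp (-h w) • F w := heq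
    have hne' : Complex.exp (-h w) ≠ 0 := Complex.exp_ne_zero _
    rw [div_eq_mul_inv, mul_comm, mul_smul]
    rw [this, smul_smul, inv_mul_cancel₀ hne', one_smul]
  have hδle : δ ≤ ‖F z - F w‖ := hδF (z, w) hzc hwc hne hprop
  have key : ∀ u ∈ D, ‖F u - Complex.exp (-h u) • F u‖ < δ / 3 := by
    intro u hu
    have h1 : ‖Complex.exp (-h u) - 1‖ < δ / (3 * c) := hμδ _ (by simpa using hh u hu)
    have h2 : ‖F u‖ ≤ c := hcF u (subset_closure hu)
    have he : F u - Complex.exp (-h u) • F u = -((Complex.exp (-h u) - 1) • F u) := by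
      rw [sub_smul, one_smul]; abel
    rw [he, norm_neg, norm_smul]
    calc ‖Complex.exp (-h u) - 1‖ * ‖F u‖
        ≤ ‖Complex.exp (-h u) - 1‖ * c := mul_le_mul_of_nonneg_left h2 (norm_nonneg _)
      _ < (δ / (3 * c)) * c := mul_lt_mul_of_pos_right h1 hc
      _ = δ / 3 := by field_simp
  have e1 : ‖F z - Complex.exp (-h z) • F z‖ < δ / 3 := key z hz
  have e2 : ‖F w - Complex.exp (-h w) • F w‖ < δ / 3 := key w hw
  have : ‖F z - F w‖ < δ := by
    calc ‖F z - F w‖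
        = ‖(F z - Complex.exp (-h z) • F z) + (Complex.exp (-h z) • F z - Complex.exp (-h w) • F w) - (F w - Complex.exp (-h w) • F w)‖ := by
          congr 1; abel
      _ ≤ ‖(F z - Complex.exp (-h z) • F z) + (Complex.exp (-h z) • F z - Complex.exp (-h w) • F w)‖ + ‖F w - Complex.exp (-h w) • F w‖ := norm_sub_le _ _
      _ ≤ ‖F z - Complex.exp (-h z) • F z‖ + ‖Complex.exp (-h z) • F z - Complex.exp (-h w) • F w‖ + ‖F w - Complex.exp (-h w) • F w‖ := by
          gcongr; exact norm_add_le _ _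
      _ < δ / 3 + ‖Complex.exp (-h z) • F z - Complex.exp (-h w) • F w‖ + δ / 3 := by gcongr
      _ = δ / 3 + 0 + δ / 3 := by rw [show Complex.exp (-h z) • F z - Complex.exp (-h w) • F w = 0 from sub_eq_zero.mpr heq]; simp
      _ < δ := by linarith
  linarith
end

section
/- Let u : ℝ² → ℝ be a C² function that is subharmonic with Δu ≥ c₀ > 0 on a strip S = {(x,y) : |y| < ε}, and suppose u(x,0) = 1 and ∂u/∂y(x,0) = 0 for all x. Then for every compact interval [a,b] there is a constant c > 0 and ε' ∈ (0,ε] such that u(x,y) ≥ 1 + c·y² for all x ∈ [a,b] and |y| < ε'. -/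
open Set

/-- Partial derivative in the second variable as a full Fréchet derivative pairing. -/
lemma hd_snd (f : ℝ × ℝ → ℝ) (hf : Differentiable ℝ f) (x y : ℝ) :
    HasDerivAt (fun y' => f (x, y')) (fderiv ℝ f (x, y) (0, 1)) y := by
  have h : HasDerivAt (fun y' : ℝ => ((x, y') : ℝ × ℝ)) (((0 : ℝ), (1 : ℝ)) : ℝ × ℝ) y :=
    HasDerivAt.prodMk (hasDerivAt_const y x) (hasDerivAt_id y)
  exact ((hf (x, y)).hasFDerivAt).comp_hasDerivAt y h

/-- Partial derivative in the first variable as a full Fréchet derivative pairing. -/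
lemma hd_fst (f : ℝ × ℝ → ℝ) (hf : Differentiable ℝ f) (x y : ℝ) :
    HasDerivAt (fun x' => f (x', y)) (fderiv ℝ f (x, y) (1, 0)) x := by
  have h : HasDerivAt (fun x' : ℝ => ((x', y) : ℝ × ℝ)) (((1 : ℝ), (0 : ℝ)) : ℝ × ℝ) x :=
    HasDerivAt.prodMk (hasDerivAt_id x) (hasDerivAt_const x y)
  exact ((hf (x, y)).hasFDerivAt).comp_hasDerivAt x h

/-- A C² function on a strip around the x-axis with Laplacian `≥ c₀ > 0`, equal to `1`
and with vanishing `y`-derivative on the axis, grows at least quadratically in `y`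
on compact `x`-intervals. -/
theorem stmt_8 (ε c₀ : ℝ) (hε : 0 < ε) (hc₀ : 0 < c₀)
    (u : ℝ × ℝ → ℝ) (hu : ContDiff ℝ 2 u)
    (hsub : ∀ p : ℝ × ℝ, |p.2| < ε →
      c₀ ≤ deriv (fun x : ℝ => deriv (fun x' : ℝ => u (x', p.2)) x) p.1 +
            deriv (fun y : ℝ => deriv (fun y' : ℝ => u (p.1, y')) y) p.2)
    (h1 : ∀ x : ℝ, u (x, 0) = 1)
    (h2 : ∀ x : ℝ, deriv (fun y : ℝ => u (x, y)) 0 = 0)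
    (a b : ℝ) :
    ∃ c > 0, ∃ ε' > 0, ε' ≤ ε ∧
      ∀ x ∈ Icc a b, ∀ y : ℝ, |y| < ε' → 1 + c * y ^ 2 ≤ u (x, y) := by
  have hud : Differentiable ℝ u := hu.differentiable (by norm_num)
  set v : ℝ × ℝ → ℝ := fun p => fderiv ℝ u p (0, 1) with hv_def
  set v₁ : ℝ × ℝ → ℝ := fun p => fderiv ℝ u p (1, 0) with hv1_def
  have hvc : ContDiff ℝ 1 v := (hu.fderiv_right (by norm_num)).clm_apply contDiff_const
  have hv1c : ContDiff ℝ 1 v₁ := (hu.fderiv_right (by norm_num)).clm_apply contDiff_const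
  have hvd : Differentiable ℝ v := hvc.differentiable one_ne_zero
  have hv1d : Differentiable ℝ v₁ := hv1c.differentiable one_ne_zero
  set w : ℝ × ℝ → ℝ := fun p => fderiv ℝ v p (0, 1) with hw_def
  set w₁ : ℝ × ℝ → ℝ := fun p => fderiv ℝ v₁ p (1, 0) with hw1_def
  have hwc : Continuous w :=
    (((hvc.fderiv_right (m := 0) (by norm_num)).clm_apply contDiff_const)).continuous
  -- v vanishes on the axis (from h2)
  have hv0 : ∀ x : ℝ, v (x, 0) = 0 := by
    intro x
    show fderiv ℝ u (x, 0) (0, 1) = 0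
    rw [← (hd_snd u hud x 0).deriv]
    exact h2 x
  -- v₁ vanishes on the axis (from h1)
  have hv10 : ∀ x : ℝ, v₁ (x, 0) = 0 := by
    intro x
    show fderiv ℝ u (x, 0) (1, 0) = 0
    rw [← (hd_fst u hud x 0).deriv,
      show (fun x' : ℝ => u (x', 0)) = fun _ => (1 : ℝ) from funext h1, deriv_const']
  -- w₁ vanishes on the axis
  have hw10 : ∀ x : ℝ, w₁ (x, 0) = 0 := by
    intro x
    show fderiv ℝ v₁ (x, 0) (1, 0) = 0
    rw [← (hd_fst v₁ hv1d x 0).deriv,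
      show (fun x' : ℝ => v₁ (x', 0)) = fun _ => (0 : ℝ) from funext hv10, deriv_const']
  -- hence w ≥ c₀ on the axis
  have hwax : ∀ x : ℝ, c₀ ≤ w (x, 0) := by
    intro x
    have hs := hsub (x, 0) (by simpa using hε)
    have e1 : deriv (fun x' : ℝ => deriv (fun x'' : ℝ => u (x'', (0 : ℝ))) x') x = w₁ (x, 0) := by
      have h : (fun x' : ℝ => deriv (fun x'' : ℝ => u (x'', (0 : ℝ))) x')
          = fun x' => v₁ (x', 0) := funext fun x' => (hd_fst u hud x' 0).deriv
      rw [h]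
      exact (hd_fst v₁ hv1d x 0).deriv
    have e2 : deriv (fun y : ℝ => deriv (fun y' : ℝ => u (x, y')) y) 0 = w (x, 0) := by
      have h : (fun y : ℝ => deriv (fun y' : ℝ => u (x, y')) y)
          = fun y => v (x, y) := funext fun y => (hd_snd u hud x y).deriv
      rw [h]
      exact (hd_snd v hvd x 0).deriv
    simp only at hs
    rw [e1, e2, hw10 x] at hs
    linarith
  -- thickening argument: w ≥ c₀/2 near the compact segment
  set K : Set (ℝ × ℝ) := Icc a b ×ˢ ({0} : Set ℝ) with hK_def
  have hK : IsCompact K := isCompact_Icc.prod isCompact_singleton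
  have hU : IsOpen {p : ℝ × ℝ | c₀ / 2 < w p} := isOpen_lt continuous_const hwc
  have hKU : K ⊆ {p : ℝ × ℝ | c₀ / 2 < w p} := by
    rintro ⟨x, y⟩ ⟨hx, hy⟩
    simp only [mem_singleton_iff] at hy
    subst hy
    exact lt_of_lt_of_le (by linarith) (hwax x)
  obtain ⟨δ, hδ, hsubset⟩ := hK.exists_thickening_subset_open hU hKU
  refine ⟨c₀ / 4, by linarith, min δ ε, lt_min hδ hε, min_le_right _ _, ?_⟩
  intro x hx y hy
  have hwbd : ∀ t : ℝ, |t| < min δ ε → c₀ / 2 ≤ w (x, t) := by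
    intro t ht
    have hmem : (x, t) ∈ Metric.thickening δ K := by
      rw [Metric.mem_thickening_iff]
      refine ⟨(x, 0), Set.mem_prod.2 ⟨hx, rfl⟩, ?_⟩
      have hd : dist ((x, t) : ℝ × ℝ) (x, 0) = |t| := by
        rw [Prod.dist_eq]
        simp [Real.dist_eq]
      rw [hd]
      exact lt_of_lt_of_le ht (min_le_left _ _)
    exact le_of_lt (hsubset hmem)
  -- the 1D functions
  set g : ℝ → ℝ := fun s => u (x, s) - 1 - c₀ / 4 * s ^ 2 with hg_def
  set G : ℝ → ℝ := fun s => v (x, s) - c₀ / 4 * (2 * s) with hG_def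
  have hder_g : ∀ t : ℝ, HasDerivAt g (G t) t := by
    intro t
    have ha := (hd_snd u hud x t).sub_const 1
    have hb : HasDerivAt (fun s : ℝ => c₀ / 4 * s ^ 2) (c₀ / 4 * (2 * t)) t := by
      have := (hasDerivAt_pow 2 t).const_mul (c₀ / 4)
      simpa using this
    exact ha.sub hb
  have hder_G : ∀ t : ℝ, HasDerivAt G (w (x, t) - c₀ / 4 * 2) t := by
    intro t
    have ha := hd_snd v hvd x t
    have hb2 : HasDerivAt (fun s : ℝ => 2 * s) (2 : ℝ) t := by
      simpa using (hasDerivAt_id t).const_mul (2 : ℝ)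
    have hb : HasDerivAt (fun s : ℝ => c₀ / 4 * (2 * s)) (c₀ / 4 * 2) t :=
      hb2.const_mul (c₀ / 4)
    exact ha.sub hb
  have hG0 : G 0 = 0 := by
    simp only [hG_def]
    rw [hv0 x]
    ring
  have hg0 : g 0 = 0 := by
    simp only [hg_def]
    rw [h1 x]
    ring
  have key : 0 ≤ g y := by
    rcases lt_trichotomy y 0 with hy0 | hy0 | hy0
    · -- y < 0 : work on Icc y 0
      have hGmono : MonotoneOn G (Icc y 0) := by
        apply monotoneOn_of_deriv_nonneg (convex_Icc y 0)
        · exact fun t _ => ((hder_G t).continuousAt).continuousWithinAt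
        · intro t _
          exact ((hder_G t).differentiableAt).differentiableWithinAt
        · intro t ht
          rw [interior_Icc] at ht
          rw [(hder_G t).deriv]
          have habs : |t| < min δ ε := by
            rw [abs_of_neg ht.2]
            calc -t < -y := by linarith [ht.1]
            _ = |y| := (abs_of_neg hy0).symm
            _ < min δ ε := hy
          have := hwbd t habs
          linarith
      have hGle : ∀ t ∈ Icc y 0, G t ≤ 0 := by
        intro t ht
        have := hGmono ht (right_mem_Icc.2 (le_of_lt hy0)) ht.2
        rw [hG0] at this
        exact this
      have hganti : AntitoneOn g (Icc y 0) := by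
        apply antitoneOn_of_deriv_nonpos (convex_Icc y 0)
        · exact fun t _ => ((hder_g t).continuousAt).continuousWithinAt
        · intro t _
          exact ((hder_g t).differentiableAt).differentiableWithinAt
        · intro t ht
          rw [interior_Icc] at ht
          rw [(hder_g t).deriv]
          exact hGle t ⟨le_of_lt ht.1, le_of_lt ht.2⟩
      have := hganti (left_mem_Icc.2 (le_of_lt hy0)) (right_mem_Icc.2 (le_of_lt hy0))
        (le_of_lt hy0)
      rw [hg0] at this
      exact this
    · rw [hy0, hg0]
    · -- y > 0 : work on Icc 0 y
      have hGmono : MonotoneOn G (Icc 0 y) := by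
        apply monotoneOn_of_deriv_nonneg (convex_Icc 0 y)
        · exact fun t _ => ((hder_G t).continuousAt).continuousWithinAt
        · intro t _
          exact ((hder_G t).differentiableAt).differentiableWithinAt
        · intro t ht
          rw [interior_Icc] at ht
          rw [(hder_G t).deriv]
          have habs : |t| < min δ ε := by
            rw [abs_of_pos ht.1]
            calc t < y := ht.2
            _ = |y| := (abs_of_pos hy0).symm
            _ < min δ ε := hy
          have := hwbd t habs
          linarith
      have hGge : ∀ t ∈ Icc 0 y, 0 ≤ G t := by
        intro t ht
        have := hGmono (left_mem_Icc.2 (le_of_lt hy0)) ht ht.1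
        rw [hG0] at this
        exact this
      have hgmono : MonotoneOn g (Icc 0 y) := by
        apply monotoneOn_of_deriv_nonneg (convex_Icc 0 y)
        · exact fun t _ => ((hder_g t).continuousAt).continuousWithinAt
        · intro t _
          exact ((hder_g t).differentiableAt).differentiableWithinAt
        · intro t ht
          rw [interior_Icc] at ht
          rw [(hder_g t).deriv]
          exact hGge t ⟨le_of_lt ht.1, le_of_lt ht.2⟩
      have := hgmono (left_mem_Icc.2 (le_of_lt hy0)) (right_mem_Icc.2 (le_of_lt hy0))
        (le_of_lt hy0)
      rw [hg0] at this
      exact this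
  have : g y = u (x, y) - 1 - c₀ / 4 * y ^ 2 := rfl
  linarith [key, this ▸ key]
end

section
/- Let u : closure(𝔻) → ℝ be continuous on the closed unit disc, harmonic on the open disc 𝔻, with u ≥ 0 on the boundary circle and u not identically 0 on the boundary. Suppose u = 0 on an open boundary arc containing the point 1. Then u > 0 everywhere on 𝔻, and the radial derivative of u at the point 1 is strictly negative: lim inf_{r→1⁻} (u(r) − u(1))/(r − 1) < 0. -/
open Complex Metric Set Filter

lemma hopf_aux {u : ℂ → ℝ} {g : ℂ → ℂ}
    (hc : ContinuousOn u (closedBall (0:ℂ) 1))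
    (hg : DifferentiableOn ℂ g (ball (0:ℂ) 1))
    (hug : ∀ z ∈ ball (0:ℂ) 1, u z = (g z).re)
    {z0 : ℂ} (hz0 : z0 ∈ ball (0:ℂ) 1)
    (hmin : ∀ z ∈ ball (0:ℂ) 1, u z0 ≤ u z) :
    ∀ z ∈ closedBall (0:ℂ) 1, u z = u z0 := by
  set f : ℂ → ℂ := fun z => Complex.exp (-g z) with hf
  have hfd : DifferentiableOn ℂ f (ball (0:ℂ) 1) := hg.neg.cexp
  have hnorm : ∀ z ∈ ball (0:ℂ) 1, ‖f z‖ = Real.exp (-(u z)) := by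
    intro z hz
    rw [hf]
    simp only [Complex.norm_exp, Complex.neg_re, hug z hz]
  have hmax : IsMaxOn (norm ∘ f) (ball (0:ℂ) 1) z0 := by
    refine isMaxOn_iff.2 fun z hz => ?_
    simp only [Function.comp_apply]
    rw [hnorm z hz, hnorm z0 hz0]
    exact Real.exp_le_exp.2 (neg_le_neg (hmin z hz))
  have heq := Complex.eqOn_of_isPreconnected_of_isMaxOn_norm
      (convex_ball (0:ℂ) 1).isPreconnected isOpen_ball hfd hz0 hmax
  have hball : EqOn u (fun _ => u z0) (ball (0:ℂ) 1) := by
    intro z hz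
    have h1 : ‖f z‖ = ‖f z0‖ := by rw [heq hz]; rfl
    rw [hnorm z hz, hnorm z0 hz0] at h1
    have := neg_injective (Real.exp_injective h1)
    simpa using this
  have hcl : EqOn u (fun _ => u z0) (closedBall (0:ℂ) 1) :=
    hball.of_subset_closure hc continuousOn_const ball_subset_closedBall
      (by rw [closure_ball (0:ℂ) one_ne_zero])
  exact fun z hz => hcl hz

/-- Hopf lemma on the disc: a continuous function on the closed unit disc, harmonic on
the open disc (i.e. the real part of a holomorphic function there), nonnegative and not
identically zero on the boundary circle, vanishing on a boundary arc around `1`, is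
positive on the disc and has strictly negative radial derivative at `1`. -/
theorem stmt_13 (u : ℂ → ℝ)
    (hc : ContinuousOn u (closedBall (0:ℂ) 1))
    (hharm : ∃ g : ℂ → ℂ, DifferentiableOn ℂ g (ball (0:ℂ) 1) ∧
      ∀ z ∈ ball (0:ℂ) 1, u z = (g z).re)
    (hpos : ∀ z ∈ sphere (0:ℂ) 1, 0 ≤ u z)
    (hne : ∃ z ∈ sphere (0:ℂ) 1, u z ≠ 0)
    (harc : ∃ ε > 0, ∀ z ∈ sphere (0:ℂ) 1, ‖z - 1‖ < ε → u z = 0) :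
    (∀ z ∈ ball (0:ℂ) 1, 0 < u z) ∧
    Filter.liminf (fun r : ℝ => (u (r : ℂ) - u 1) / (r - 1)) (nhdsWithin 1 (Iio 1)) < 0 := by
  obtain ⟨g, hg, hug⟩ := hharm
  obtain ⟨ε, hεpos, harc⟩ := harc
  have h1s : (1:ℂ) ∈ sphere (0:ℂ) 1 := by simp
  have hu1 : u 1 = 0 := harc 1 h1s (by simpa using hεpos)
  have hnonconst : ¬ ∀ z ∈ closedBall (0:ℂ) 1, u z = 0 := by
    obtain ⟨w, hw, hwne⟩ := hne
    exact fun h => hwne (h w (sphere_subset_closedBall hw))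
  have hne' : Set.Nonempty (closedBall (0:ℂ) 1) := ⟨0, by simp⟩
  have hA : ∀ z ∈ closedBall (0:ℂ) 1, 0 ≤ u z := by
    obtain ⟨z1, hz1, hmin⟩ := (isCompact_closedBall (0:ℂ) 1).exists_isMinOn hne' hc
    rcases lt_or_eq_of_le (mem_closedBall_zero_iff.1 hz1) with h | h
    · exfalso
      have hz1b : z1 ∈ ball (0:ℂ) 1 := mem_ball_zero_iff.2 h
      have hconst := hopf_aux hc hg hug hz1b
        (fun z hz => isMinOn_iff.1 hmin z (ball_subset_closedBall hz))
      apply hnonconst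
      intro w hw
      rw [hconst w hw, ← hconst 1 (sphere_subset_closedBall h1s), hu1]
    · intro z hz
      exact le_trans (hpos z1 (mem_sphere_zero_iff_norm.2 h)) (isMinOn_iff.1 hmin z hz)
  have hB : ∀ z ∈ ball (0:ℂ) 1, 0 < u z := by
    intro z hz
    rcases (hA z (ball_subset_closedBall hz)).lt_or_eq with h | h
    · exact h
    exfalso
    have hconst := hopf_aux hc hg hug hz
      (fun w hw => by rw [← h]; exact hA w (ball_subset_closedBall hw))
    apply hnonconst
    intro w hw
    rw [hconst w hw, ← h]

  -- sphere identity
  have hsph : ∀ ζ ∈ sphere (0:ℂ) 1, ((1:ℂ) - ζ).re = ‖ζ - 1‖^2 / 2 := by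
    intro ζ hζ
    have h1 : ‖ζ‖ = 1 := mem_sphere_zero_iff_norm.1 hζ
    have h2 : ζ.re^2 + ζ.im^2 = 1 := by
      have := Complex.sq_norm ζ
      rw [h1] at this
      simp only [Complex.normSq_apply] at this
      nlinarith [this]
    have h3 : ‖ζ - 1‖^2 = (ζ.re - 1)^2 + ζ.im^2 := by
      rw [Complex.sq_norm]
      simp [Complex.normSq_apply, Complex.sub_re, Complex.sub_im, sq]
    rw [h3]
    simp only [Complex.sub_re, Complex.one_re]
    nlinarith [h2]
  -- constants
  obtain ⟨zc, hzc, hmaxC⟩ := (isCompact_closedBall (0:ℂ) 1).exists_isMaxOn hne' hc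
  set C := u zc with hCdef
  have hCpos : 0 < C := by
    obtain ⟨w, hw, hwne⟩ := hne
    exact lt_of_lt_of_le (lt_of_le_of_ne (hpos w hw) (Ne.symm hwne))
      (isMaxOn_iff.1 hmaxC w (sphere_subset_closedBall hw))
  set K := 2 * C / ε ^ 2 with hKdef
  have hKpos : 0 < K := by positivity
  have hre_nonneg : ∀ z ∈ closedBall (0:ℂ) 1, 0 ≤ ((1:ℂ) - z).re := by
    intro z hz
    have h1 : z.re ≤ 1 := by
      have := Complex.abs_re_le_norm z
      have h2 : ‖z‖ ≤ 1 := mem_closedBall_zero_iff.1 hz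
      cases abs_le.1 (le_trans this h2) with
      | intro h3 h4 => exact h4
    simp only [Complex.sub_re, Complex.one_re]
    linarith
  -- upper barrier
  have hupper : ∀ z ∈ closedBall (0:ℂ) 1, u z ≤ K * ((1:ℂ) - z).re := by
    set v : ℂ → ℝ := fun z => K * ((1:ℂ) - z).re - u z with hvdef
    have hvc : ContinuousOn v (closedBall (0:ℂ) 1) :=
      (continuousOn_const.mul
        ((Complex.continuous_re.comp (continuous_const.sub continuous_id)).continuousOn)).sub hc
    have hgv : DifferentiableOn ℂ (fun z => (K:ℂ) * (1 - z) - g z) (ball (0:ℂ) 1) :=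
      (((differentiable_const ((K:ℂ))).mul
        ((differentiable_const (1:ℂ)).sub differentiable_id)).differentiableOn).sub hg
    have hvre : ∀ z ∈ ball (0:ℂ) 1, v z = ((K:ℂ) * (1 - z) - g z).re := by
      intro z hz
      simp [hvdef, Complex.sub_re, Complex.mul_re, hug z hz]
    have hvs : ∀ ζ ∈ sphere (0:ℂ) 1, 0 ≤ v ζ := by
      intro ζ hζ
      have hre := hsph ζ hζ
      by_cases hcase : ‖ζ - 1‖ < ε
      · simp only [hvdef]
        rw [harc ζ hζ hcase]
        have := hre_nonneg ζ (sphere_subset_closedBall hζ)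
        nlinarith
      · push_neg at hcase
        have huc : u ζ ≤ C := isMaxOn_iff.1 hmaxC ζ (sphere_subset_closedBall hζ)
        have hsq : ε^2 ≤ ‖ζ-1‖^2 := by nlinarith [hεpos.le, norm_nonneg (ζ - 1)]
        have hKε : K * (ε^2/2) = C := by
          rw [hKdef]; field_simp
        have : K * (ε^2/2) ≤ K * (‖ζ-1‖^2/2) :=
          mul_le_mul_of_nonneg_left (by linarith) hKpos.le
        simp only [hvdef]
        rw [hre]
        linarith [hKε ▸ this]
    obtain ⟨z1, hz1, hminv⟩ := (isCompact_closedBall (0:ℂ) 1).exists_isMinOn hne' hvc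
    have hv0 : ∀ z ∈ closedBall (0:ℂ) 1, 0 ≤ v z := by
      rcases lt_or_eq_of_le (mem_closedBall_zero_iff.1 hz1) with h | h
      · exfalso
        have hz1b : z1 ∈ ball (0:ℂ) 1 := mem_ball_zero_iff.2 h
        have hconst := hopf_aux hvc hgv hvre hz1b
          (fun z hz => isMinOn_iff.1 hminv z (ball_subset_closedBall hz))
        -- v ≡ v z1 on closedBall; v 1 = 0 so v ≡ 0
        have hv1 : v 1 = 0 := by simp [hvdef, hu1]
        have hvz1 : v z1 = 0 := by
          rw [← hv1]
          exact (hconst 1 (sphere_subset_closedBall h1s)).symm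
        -- pick ζ0 near 1 on the sphere with Re(1-ζ0) > 0
        obtain ⟨ζ0, hζ0s, hζ0near, hζ0re⟩ :
            ∃ ζ0 ∈ sphere (0:ℂ) 1, ‖ζ0 - 1‖ < ε ∧ 0 < ((1:ℂ) - ζ0).re := by
          set θ := min (ε/4) 1 with hθ
          have hθpos : 0 < θ := by positivity
          have hθ1 : θ ≤ 1 := min_le_right _ _
          refine ⟨Complex.exp (θ * Complex.I), ?_, ?_, ?_⟩
          · simp [mem_sphere_zero_iff_norm, Complex.norm_exp_ofReal_mul_I θ]
          · have hb := Complex.norm_exp_sub_one_le (x := θ * Complex.I)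
              (by rw [norm_mul, Complex.norm_I, mul_one, Complex.norm_real, Real.norm_eq_abs, abs_of_pos hθpos]; exact hθ1)
            have h4 : ‖(↑θ * Complex.I : ℂ)‖ = θ := by
              rw [norm_mul, Complex.norm_I, mul_one, Complex.norm_real, Real.norm_eq_abs]; exact abs_of_pos hθpos
            rw [h4] at hb
            have h5 : θ ≤ ε/4 := min_le_left _ _
            calc ‖Complex.exp (θ * Complex.I) - 1‖ ≤ 2*θ := hb
              _ < ε := by linarith
          · have hre2 : (Complex.exp (θ * Complex.I)).re = Real.cos θ := by
              simp [Complex.exp_ofReal_mul_I_re]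
            have hsin : 0 < Real.sin θ :=
              Real.sin_pos_of_pos_of_lt_pi hθpos (lt_of_le_of_lt hθ1 (by linarith [Real.pi_gt_three]))
            have hcos : Real.cos θ < 1 := by
              nlinarith [Real.sin_sq_add_cos_sq θ, hsin]
            simp only [Complex.sub_re, Complex.one_re, hre2]
            linarith
        have hvζ0 : v ζ0 = 0 := by
          rw [hconst ζ0 (sphere_subset_closedBall hζ0s), hvz1]
        have huζ0 : u ζ0 = 0 := harc ζ0 hζ0s hζ0near
        simp only [hvdef] at hvζ0
        rw [huζ0] at hvζ0
        nlinarith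
      · intro z hz
        exact le_trans (hvs z1 (mem_sphere_zero_iff_norm.2 h)) (isMinOn_iff.1 hminv z hz)
    intro z hz
    have := hv0 z hz
    simp only [hvdef] at this
    linarith

  -- Step D: lower barrier on annuli
  have hhalfsub : sphere (0:ℂ) (1/2) ⊆ ball (0:ℂ) 1 := by
    intro z hz
    rw [mem_ball_zero_iff]
    rw [mem_sphere_zero_iff_norm] at hz
    rw [hz]; norm_num
  obtain ⟨zm, hzm, hminm⟩ := (isCompact_sphere (0:ℂ) (1/2)).exists_isMinOn
    ⟨((1/2 : ℝ) : ℂ), by rw [mem_sphere_zero_iff_norm, Complex.norm_real]; norm_num⟩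
    (hc.mono (fun z hz => ball_subset_closedBall (hhalfsub hz)))
  set ε0 := u zm with hε0def
  have hε0 : 0 < ε0 := hB zm (hhalfsub hzm)
  obtain ⟨n, hn⟩ := exists_nat_ge (Real.log 2 / ε0)
  have hnpos : 0 < (n:ℝ) := lt_of_lt_of_le (div_pos (Real.log_pos one_lt_two) hε0) hn
  have hnlog : Real.log 2 ≤ n * ε0 := by
    rw [div_le_iff₀ hε0] at hn; linarith
  have hkey : ∀ ρ : ℝ, 1/2 < ρ → ρ < 1 → ∀ r : ℝ, 1/2 < r → r < ρ →
      Real.exp (-(n * u (r:ℂ))) / r ≤ 1/ρ := by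
    intro ρ hρ1 hρ2 r hr1 hr2
    have hρpos : (0:ℝ) < ρ := by linarith
    set S : Set ℂ := ball (0:ℂ) ρ \ closedBall (0:ℂ) (1/2) with hSdef
    have hSopen : IsOpen S := isOpen_ball.sdiff Metric.isClosed_closedBall
    have hclos : closure S ⊆ closedBall (0:ℂ) ρ ∩ (ball (0:ℂ) (1/2))ᶜ := by
      have h1 : S ⊆ ball (0:ℂ) ρ ∩ (closedBall (0:ℂ) (1/2))ᶜ := by rw [hSdef, diff_eq]
      refine (closure_mono h1).trans ?_
      refine (closure_inter_subset_inter_closure _ _).trans ?_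
      rw [closure_ball (0:ℂ) (ne_of_gt hρpos), closure_compl,
        interior_closedBall (0:ℂ) (by norm_num : (1/2:ℝ) ≠ 0)]
    have hclos2 : ∀ z ∈ closure S, 1/2 ≤ ‖z‖ ∧ ‖z‖ ≤ ρ := by
      intro z hz
      obtain ⟨h1, h2⟩ := hclos hz
      refine ⟨?_, mem_closedBall_zero_iff.1 h1⟩
      by_contra hlt; push_neg at hlt
      exact h2 (mem_ball_zero_iff.2 hlt)
    have hclosball : ∀ z ∈ closure S, z ∈ ball (0:ℂ) 1 := fun z hz =>
      mem_ball_zero_iff.2 (lt_of_le_of_lt (hclos2 z hz).2 hρ2)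
    have hclosne : ∀ z ∈ closure S, z ≠ 0 := by
      intro z hz h0
      have h3 := (hclos2 z hz).1
      rw [h0] at h3; simp at h3; linarith
    set G : ℂ → ℂ := fun z => Complex.exp (-((n:ℂ) * g z)) / z with hGdef
    have hGdc : DiffContOnCl ℂ G S := by
      constructor
      · apply DifferentiableOn.div
        · exact ((hg.mono (fun z hz =>
            mem_ball_zero_iff.2 (lt_of_lt_of_le (mem_ball_zero_iff.1 hz.1) hρ2.le))).const_mul
            ((n:ℂ))).neg.cexp
        · exact differentiableOn_id
        · exact fun z hz => hclosne z (subset_closure hz)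
      · apply ContinuousOn.div
        · exact Complex.continuous_exp.comp_continuousOn
            ((continuousOn_const.mul (hg.continuousOn.mono hclosball)).neg)
        · exact continuousOn_id
        · exact hclosne
    have hGnorm : ∀ z : ℂ, z ∈ ball (0:ℂ) 1 → ‖G z‖ = Real.exp (-(n * u z)) / ‖z‖ := by
      intro z hz
      rw [hGdef]
      simp only
      rw [norm_div, Complex.norm_exp]
      congr 2
      simp [Complex.neg_re, Complex.mul_re, hug z hz]
    have hfr : ∀ z ∈ frontier S, ‖G z‖ ≤ 1/ρ := by
      intro z hz
      have hzcl : z ∈ closure S := frontier_subset_closure hz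
      have hznS : z ∉ S := by
        rw [hSopen.frontier_eq] at hz
        exact hz.2
      obtain ⟨hge, hle⟩ := hclos2 z hzcl
      have hzball : z ∈ ball (0:ℂ) 1 := hclosball z hzcl
      have hcases : ‖z‖ = ρ ∨ ‖z‖ = 1/2 := by
        by_contra hcon
        push_neg at hcon
        apply hznS
        refine ⟨mem_ball_zero_iff.2 (lt_of_le_of_ne hle hcon.1), ?_⟩
        intro hmem
        rw [mem_closedBall_zero_iff] at hmem
        exact hcon.2 (le_antisymm hmem hge)
      rw [hGnorm z hzball]
      rcases hcases with h | h
      · rw [h]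
        have hu0 : 0 ≤ u z := (hB z hzball).le
        have hexp1 : Real.exp (-(n * u z)) ≤ 1 := by
          rw [← Real.exp_zero]
          apply Real.exp_le_exp.2
          nlinarith [hnpos.le]
        exact (div_le_div_iff_of_pos_right hρpos).2 hexp1
      · rw [h]
        have hzsph : z ∈ sphere (0:ℂ) (1/2) := mem_sphere_zero_iff_norm.2 h
        have h5 : ε0 ≤ u z := isMinOn_iff.1 hminm z hzsph
        have hexp : Real.exp (-(n * u z)) ≤ 1/2 := by
          rw [show (1/2:ℝ) = Real.exp (-Real.log 2) by
            rw [Real.exp_neg, Real.exp_log (by norm_num : (0:ℝ) < 2)]; norm_num]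
          apply Real.exp_le_exp.2
          have h6 : (n:ℝ) * ε0 ≤ n * u z := mul_le_mul_of_nonneg_left h5 hnpos.le
          linarith
        have h7 : Real.exp (-(n * u z)) / (1/2) ≤ 1 := by
          rw [div_le_one (by norm_num : (0:ℝ) < 1/2)]
          exact hexp
        calc Real.exp (-(n * u z)) / (1/2) ≤ 1 := h7
          _ ≤ 1/ρ := by rw [le_div_iff₀ hρpos]; linarith
    have hrnorm : ‖((r:ℝ):ℂ)‖ = r := by
      rw [Complex.norm_real, Real.norm_eq_abs, abs_of_pos (by linarith : (0:ℝ) < r)]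
    have hrS : ((r:ℝ):ℂ) ∈ S := by
      refine ⟨mem_ball_zero_iff.2 (by rw [hrnorm]; exact hr2), ?_⟩
      intro hmem
      rw [mem_closedBall_zero_iff, hrnorm] at hmem
      linarith
    have hbd : Bornology.IsBounded S := Metric.isBounded_ball.subset diff_subset
    have hmain := Complex.norm_le_of_forall_mem_frontier_norm_le hbd hGdc hfr (subset_closure hrS)
    have hrb : ((r:ℝ):ℂ) ∈ ball (0:ℂ) 1 := mem_ball_zero_iff.2 (by rw [hrnorm]; linarith)
    rw [hGnorm _ hrb, hrnorm] at hmain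
    exact hmain
  have hlow : ∀ r : ℝ, 1/2 < r → r < 1 → (1 - r)/n ≤ u (r:ℂ) := by
    intro r hr1 hr2
    have hrpos : (0:ℝ) < r := by linarith
    have hle : Real.exp (-(n * u (r:ℂ))) / r ≤ 1 := by
      by_contra hcon
      push_neg at hcon
      set t := Real.exp (-(n * u (r:ℂ))) / r with htdef
      have htpos : 0 < t := by positivity
      have h1t : 1/t < 1 := by rw [div_lt_one htpos]; exact hcon
      set ρ := (max r (1/t) + 1)/2 with hρdef
      have hmaxlt : max r (1/t) < 1 := max_lt hr2 h1t
      have hρlt1 : ρ < 1 := by rw [hρdef]; linarith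
      have hρgtmax : max r (1/t) < ρ := by
        rw [hρdef]; linarith [le_max_left r (1/t)]
      have hρgtr : r < ρ := lt_of_le_of_lt (le_max_left _ _) hρgtmax
      have hρpos : (0:ℝ) < ρ := by linarith
      have h2 := hkey ρ (by linarith) hρlt1 r hr1 hρgtr
      have h3 : 1/ρ < t := by
        rw [div_lt_iff₀ hρpos]
        have h4 : 1/t < ρ := lt_of_le_of_lt (le_max_right _ _) hρgtmax
        rw [div_lt_iff₀ htpos] at h4
        nlinarith
      rw [← htdef] at h2
      linarith
    rw [div_le_one hrpos] at hle
    have hlog : -(n * u (r:ℂ)) ≤ Real.log r := by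
      have h8 := Real.log_le_log (Real.exp_pos _) hle
      rwa [Real.log_exp] at h8
    have hlogr : Real.log r ≤ r - 1 := Real.log_le_sub_one_of_pos hrpos
    rw [div_le_iff₀ hnpos]
    nlinarith
  -- conclusion
  refine ⟨hB, ?_⟩
  have hev : ∀ᶠ r : ℝ in nhdsWithin (1:ℝ) (Iio (1:ℝ)), r ∈ Ioo (1/2 : ℝ) 1 :=
    Ioo_mem_nhdsLT_of_mem (by rw [Set.mem_Ioc]; norm_num)
  have hub : ∀ᶠ r : ℝ in nhdsWithin (1:ℝ) (Iio (1:ℝ)), (u (r:ℂ) - u 1) / (r - 1) ≤ -(1/n) := by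
    filter_upwards [hev] with r hr
    rw [hu1, sub_zero, div_le_iff_of_neg (by linarith [hr.2] : r - 1 < 0)]
    have h1 := hlow r hr.1 hr.2
    have h2 : -(1/(n:ℝ)) * (r - 1) = (1 - r)/n := by ring
    rw [h2]
    exact h1
  have hlb : ∀ᶠ r : ℝ in nhdsWithin (1:ℝ) (Iio (1:ℝ)), -K ≤ (u (r:ℂ) - u 1) / (r - 1) := by
    filter_upwards [hev] with r hr
    rw [hu1, sub_zero, le_div_iff_of_neg (by linarith [hr.2] : r - 1 < 0)]
    have hrb : ((r:ℝ):ℂ) ∈ closedBall (0:ℂ) 1 := by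
      rw [mem_closedBall_zero_iff, Complex.norm_real, Real.norm_eq_abs,
        abs_of_pos (by linarith [hr.1] : (0:ℝ) < r)]
      linarith [hr.2]
    have h2 := hupper _ hrb
    have h3 : ((1:ℂ) - (r:ℝ)).re = 1 - r := by simp
    rw [h3] at h2
    have h4 : (-K) * (r - 1) = K * (1 - r) := by ring
    linarith
  have hnineq : -(1/(n:ℝ)) < 0 := by
    have : 0 < 1/(n:ℝ) := by positivity
    linarith
  rw [Filter.liminf_eq]
  refine lt_of_le_of_lt (csSup_le ⟨-K, hlb⟩ ?_) hnineq
  intro b hb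
  have hb' : ∀ᶠ r : ℝ in nhdsWithin (1:ℝ) (Iio (1:ℝ)), b ≤ (u (r:ℂ) - u 1) / (r - 1) := hb
  obtain ⟨x, hx1, hx2⟩ := (hb'.and hub).exists
  linarith
end

section
/- Let S ⊆ ℂ be an open strip containing ℝ and f : S → ℂ² a holomorphic immersion that is injective on ℝ and satisfies |f(z)| > 1 = |f(t)| for all z ∈ S \ ℝ and t ∈ ℝ. Then there exists a positive continuous even function g : ℝ → (0,∞) such that the strip S_g = {x+iy : |y| < g(x)} is contained in S and f is injective on S_g. -/
open Complex Set Metric Filter Topology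

noncomputable section

namespace Stmt17Aux

/-- The real line inside `ℂ`. -/
def L : Set ℂ := {z : ℂ | z.im = 0}

/-- A closed rectangle around the real line. -/
def Q (a b : ℝ) : Set ℂ := {z : ℂ | |z.re| ≤ a ∧ |z.im| ≤ b}

lemma mem_L_eq {z : ℂ} (hz : z ∈ L) : z = (z.re : ℂ) := by
  apply Complex.ext
  · simp
  · have h : z.im = 0 := hz
    simpa using h

lemma Q_mono {a b b' : ℝ} (h : b ≤ b') : Q a b ⊆ Q a b' :=
  fun z hz => ⟨hz.1, hz.2.trans h⟩

lemma isCompact_Q (a b : ℝ) : IsCompact (Q a b) := by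
  rw [Metric.isCompact_iff_isClosed_bounded]
  constructor
  · exact (isClosed_le (continuous_abs.comp Complex.continuous_re) continuous_const).inter
      (isClosed_le (continuous_abs.comp Complex.continuous_im) continuous_const)
  · rw [Metric.isBounded_iff_subset_closedBall 0]
    refine ⟨a + b, fun z hz => ?_⟩
    rw [Metric.mem_closedBall, dist_zero_right]
    calc ‖z‖ ≤ |z.re| + |z.im| := Complex.norm_le_abs_re_add_abs_im z
      _ ≤ a + b := add_le_add hz.1 hz.2

variable {S : Set ℂ} {f : ℂ → EuclideanSpace ℂ (Fin 2)}

/-- Local injectivity at points of `S` where the derivative is nonzero. -/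
lemma locInj (hS : IsOpen S) (hf : DifferentiableOn ℂ f S) {z : ℂ} (hz : z ∈ S)
    (hd : deriv f z ≠ 0) : ∃ r > 0, Set.InjOn f (Metric.ball z r) := by
  obtain ⟨i, hi⟩ : ∃ i, deriv f z i ≠ 0 := by
    by_contra h
    push_neg at h
    exact hd (PiLp.ext h)
  set π : EuclideanSpace ℂ (Fin 2) →L[ℂ] ℂ := EuclideanSpace.proj i with hπ
  set g : ℂ → ℂ := fun w => π (f w) with hg
  have hfa : AnalyticAt ℂ f z := hf.analyticAt (hS.mem_nhds hz)
  have hga : AnalyticAt ℂ g z := (π.analyticAt (f z)).comp hfa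
  have hdf : HasDerivAt f (deriv f z) z := hfa.differentiableAt.hasDerivAt
  have hdg : HasDerivAt g (π (deriv f z)) z := π.hasFDerivAt.comp_hasDerivAt z hdf
  have hπd : π (deriv f z) ≠ 0 := hi
  obtain ⟨p, hp⟩ := hga
  have hstrict : HasStrictDerivAt g (π (deriv f z)) z := by
    have h1 := hp.hasStrictDerivAt
    have h2 : (p 1 fun _ => 1) = π (deriv f z) := by
      rw [← hp.deriv]
      exact hdg.deriv
    rwa [h2] at h1
  set e := (hstrict.hasStrictFDerivAt_equiv hπd).toOpenPartialHomeomorph g with he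
  have hsrc : z ∈ e.source := (hstrict.hasStrictFDerivAt_equiv hπd).mem_toOpenPartialHomeomorph_source
  obtain ⟨r, hr, hball⟩ := Metric.isOpen_iff.1 e.open_source z hsrc
  refine ⟨r, hr, fun x hx y hy hxy => ?_⟩
  have hge : ∀ w, e w = g w := fun w => rfl
  have : g x = g y := by rw [hg]; simp only [hxy]
  exact e.injOn (hball hx) (hball hy) (by rw [hge, hge]; exact this)

/-- The key extension step: injectivity on a compact set (plus the real line)
extends to injectivity after adding a thin rectangle. -/
lemma key (hS : IsOpen S) (hSR : ∀ t : ℝ, (t : ℂ) ∈ S)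
    (hf : DifferentiableOn ℂ f S)
    (himm : ∀ z ∈ S, deriv f z ≠ 0)
    (hinj : ∀ s t : ℝ, f (s : ℂ) = f (t : ℂ) → s = t)
    (hf1 : ∀ t : ℝ, ‖f (t : ℂ)‖ = 1)
    (hf2 : ∀ z ∈ S, z.im ≠ 0 → 1 < ‖f z‖)
    (K : Set ℂ) (hK : IsCompact K) (hKS : K ⊆ S) (hKinj : Set.InjOn f (K ∪ L))
    (a : ℝ) :
    ∃ b > 0, Q a b ⊆ S ∧ Set.InjOn f (K ∪ Q a b ∪ L) := by
  have injL : Set.InjOn f L := fun p hp q hq hpq => by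
    have h1 : f ((p.re : ℝ) : ℂ) = f ((q.re : ℝ) : ℂ) := by
      rw [← mem_L_eq hp, ← mem_L_eq hq]; exact hpq
    have h2 := hinj p.re q.re h1
    exact Complex.ext h2 (by rw [show p.im = 0 from hp, show q.im = 0 from hq])
  -- a small rectangle is inside S
  have hC : IsCompact ((fun t : ℝ => (t : ℂ)) '' Set.Icc (-a) a) :=
    isCompact_Icc.image Complex.continuous_ofReal
  have hCS : ((fun t : ℝ => (t : ℂ)) '' Set.Icc (-a) a) ⊆ S := by
    rintro _ ⟨t, _, rfl⟩; exact hSR t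
  obtain ⟨δ, hδ, hδS⟩ := hC.exists_thickening_subset_open hS hCS
  have hQS : Q a (δ / 2) ⊆ S := by
    intro z hz
    apply hδS
    rw [Metric.mem_thickening_iff]
    refine ⟨(z.re : ℂ), ⟨z.re, by simpa [Set.mem_Icc, abs_le] using hz.1, rfl⟩, ?_⟩
    have hzz : z - (z.re : ℂ) = (z.im : ℂ) * Complex.I := by
      apply Complex.ext <;> simp
    rw [Complex.dist_eq, hzz]
    have : ‖(z.im : ℂ) * Complex.I‖ = |z.im| := by
      rw [norm_mul, Complex.norm_I, mul_one, Complex.norm_real, Real.norm_eq_abs]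
    rw [this]
    calc |z.im| ≤ δ / 2 := hz.2
      _ < δ := by linarith
  have noL : ∀ z w : ℂ, z ∈ S → z.im ≠ 0 → w ∈ L → f z ≠ f w := by
    intro z w hzS hzim hwL hfzw
    have h1 : ‖f w‖ = 1 := by
      rw [show w = (w.re : ℂ) from mem_L_eq hwL]
      exact hf1 w.re
    have h2 := hf2 z hzS hzim
    rw [hfzw, h1] at h2
    exact lt_irrefl 1 h2
  by_contra hcon
  push_neg at hcon
  -- produce bad pairs at heights δ/2/(k+1)
  have hb : ∀ k : ℕ, ∃ z w : ℂ, z ∈ Q a (δ / 2 / (k + 1)) ∧ z.im ≠ 0 ∧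
      w ∈ K ∪ Q a (δ / 2) ∧ f z = f w ∧ z ≠ w := by
    intro k
    have hbk : (0 : ℝ) < δ / 2 / (k + 1) := by positivity
    have hble : δ / 2 / (k + 1) ≤ δ / 2 := by
      rw [div_le_iff₀ (by positivity)]
      nlinarith [Nat.cast_nonneg (α := ℝ) k]
    have hsub : Q a (δ / 2 / (k + 1)) ⊆ Q a (δ / 2) := Q_mono hble
    have hni := hcon _ hbk (hsub.trans hQS)
    rw [Set.InjOn] at hni
    push_neg at hni
    obtain ⟨p, hp, q, hq, hfpq, hpq⟩ := hni
    have split : ∀ x, x ∈ K ∪ Q a (δ / 2 / (k + 1)) ∪ L →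
        x ∈ K ∪ L ∨ (x ∈ Q a (δ / 2 / (k + 1)) ∧ x.im ≠ 0) := by
      intro x hx
      by_cases him : x.im = 0
      · rcases hx with (hx | hx) | hx
        · exact Or.inl (Or.inl hx)
        · exact Or.inl (Or.inr him)
        · exact Or.inl (Or.inr hx)
      · rcases hx with (hx | hx) | hx
        · exact Or.inl (Or.inl hx)
        · exact Or.inr ⟨hx, him⟩
        · exact absurd hx him
    have hmemS : ∀ x, x ∈ Q a (δ / 2 / (k + 1)) → x ∈ S := fun x hx => hQS (hsub hx)
    rcases split p hp with hp' | hp' <;> rcases split q hq with hq' | hq'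
    · exact absurd (hKinj hp' hq' hfpq) hpq
    · -- q is the off-real point
      refine ⟨q, p, hq'.1, hq'.2, ?_, hfpq.symm, Ne.symm hpq⟩
      rcases hp' with hpK | hpL
      · exact Or.inl hpK
      · exact absurd hfpq.symm (noL q p (hmemS q hq'.1) hq'.2 hpL)
    · refine ⟨p, q, hp'.1, hp'.2, ?_, hfpq, hpq⟩
      rcases hq' with hqK | hqL
      · exact Or.inl hqK
      · exact absurd hfpq (noL p q (hmemS p hp'.1) hp'.2 hqL)
    · refine ⟨p, q, hp'.1, hp'.2, Or.inr (Q_mono ?_ hq'.1), hfpq, hpq⟩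
      rw [div_le_iff₀ (by positivity)]
      nlinarith [Nat.cast_nonneg (α := ℝ) k]
  choose z w hzQ hzim hw hfzw hzw using hb
  have hCcompact : IsCompact (K ∪ Q a (δ / 2)) := hK.union (isCompact_Q a _)
  have hCsubS : K ∪ Q a (δ / 2) ⊆ S := Set.union_subset hKS hQS
  have hble' : ∀ k : ℕ, δ / 2 / (k + 1) ≤ δ / 2 := by
    intro k
    rw [div_le_iff₀ (by positivity)]
    nlinarith [Nat.cast_nonneg (α := ℝ) k]
  have hzC : ∀ k, z k ∈ K ∪ Q a (δ / 2) := fun k => Or.inr (Q_mono (hble' k) (hzQ k))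
  obtain ⟨x, hxC, φ, hφ, hzx⟩ := hCcompact.tendsto_subseq hzC
  obtain ⟨y, hyC, ψ, hψ, hwy⟩ := hCcompact.tendsto_subseq (fun k => hw (φ k))
  set χ : ℕ → ℕ := φ ∘ ψ with hχdef
  have hχ : StrictMono χ := hφ.comp hψ
  have hzx' : Tendsto (fun k => z (χ k)) atTop (𝓝 x) := hzx.comp hψ.tendsto_atTop
  have hwy' : Tendsto (fun k => w (χ k)) atTop (𝓝 y) := hwy
  have hxS : x ∈ S := hCsubS hxC
  have hyS : y ∈ S := hCsubS hyC
  -- x is real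
  have hxim : x.im = 0 := by
    have h1 : Tendsto (fun k => (z (χ k)).im) atTop (𝓝 x.im) :=
      (Complex.continuous_im.tendsto x).comp hzx'
    have h2 : Tendsto (fun k : ℕ => δ / 2 / (k + 1)) atTop (𝓝 0) := by
      have := tendsto_one_div_add_atTop_nhds_zero_nat.const_mul (δ / 2)
      simp only [mul_zero] at this
      convert this using 2 with k
      ring
    have h3 : Tendsto (fun k => (z (χ k)).im) atTop (𝓝 0) := by
      apply squeeze_zero_norm _ h2
      intro k
      have hk : (k : ℝ) + 1 ≤ (χ k : ℝ) + 1 := by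
        have hkk : k ≤ χ k := hχ.le_apply
        have := (Nat.cast_le (α := ℝ)).2 hkk; linarith
      calc ‖(z (χ k)).im‖ = |(z (χ k)).im| := rfl
        _ ≤ δ / 2 / (χ k + 1) := (hzQ (χ k)).2
        _ ≤ δ / 2 / (k + 1) := by
            apply div_le_div_of_nonneg_left (by positivity) (by positivity) hk
    exact tendsto_nhds_unique h1 h3
  -- limits have equal values
  have hfx : Tendsto (fun k => f (z (χ k))) atTop (𝓝 (f x)) :=
    (hf.continuousOn.continuousAt (hS.mem_nhds hxS)).tendsto.comp hzx'
  have hfy : Tendsto (fun k => f (w (χ k))) atTop (𝓝 (f y)) :=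
    (hf.continuousOn.continuousAt (hS.mem_nhds hyS)).tendsto.comp hwy'
  have hfxy : f x = f y := by
    apply tendsto_nhds_unique _ hfy
    have : (fun k => f (z (χ k))) = fun k => f (w (χ k)) := funext fun k => hfzw (χ k)
    rwa [this] at hfx
  -- y is real, hence x = y
  have hyim : y.im = 0 := by
    by_contra him
    have h2 := hf2 y hyS him
    have h1 : ‖f x‖ = 1 := by
      rw [show x = (x.re : ℂ) from mem_L_eq hxim]
      exact hf1 x.re
    rw [← hfxy, h1] at h2
    exact lt_irrefl 1 h2
  have hxy : x = y := by
    have h1 : f ((x.re : ℝ) : ℂ) = f ((y.re : ℝ) : ℂ) := by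
      rw [← mem_L_eq hxim, ← mem_L_eq hyim]; exact hfxy
    have h2 := hinj x.re y.re h1
    exact Complex.ext h2 (by rw [hxim, hyim])
  -- contradiction with local injectivity at x
  obtain ⟨r, hr, hinj_ball⟩ := locInj hS hf hxS (himm x hxS)
  have hb1 : ∀ᶠ k in atTop, z (χ k) ∈ Metric.ball x r :=
    hzx'.eventually (by filter_upwards [Metric.ball_mem_nhds x hr] with u hu using hu)
  have hb2 : ∀ᶠ k in atTop, w (χ k) ∈ Metric.ball x r := by
    rw [hxy]
    exact hwy'.eventually (by filter_upwards [Metric.ball_mem_nhds y hr] with u hu using hu)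
  obtain ⟨k, h1, h2⟩ := (hb1.and hb2).exists
  exact hzw (χ k) (hinj_ball h1 h2 (hfzw (χ k)))

/-- Invariant for the recursive construction. -/
def Pred (S : Set ℂ) (f : ℂ → EuclideanSpace ℂ (Fin 2)) (n : ℕ) (p : ℝ × Set ℂ) : Prop :=
  0 < p.1 ∧ p.2 ⊆ S ∧ Set.InjOn f (p.2 ∪ L) ∧ Q ((n : ℝ) + 1) p.1 ⊆ p.2 ∧ IsCompact p.2

end Stmt17Aux

open Stmt17Aux

/-- A holomorphic immersion on a strip around `ℝ`, injective on `ℝ`, with `|f| = 1` on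
`ℝ` and `|f| > 1` off `ℝ`, is injective on some substrip `S_g = {x+iy : |y| < g(x)}`
for a positive continuous even function `g`. -/
theorem stmt_17 (S : Set ℂ) (hS : IsOpen S) (hSR : ∀ t : ℝ, (t : ℂ) ∈ S)
    (f : ℂ → EuclideanSpace ℂ (Fin 2)) (hf : DifferentiableOn ℂ f S)
    (himm : ∀ z ∈ S, deriv f z ≠ 0)
    (hinj : ∀ s t : ℝ, f (s : ℂ) = f (t : ℂ) → s = t)
    (hf1 : ∀ t : ℝ, ‖f (t : ℂ)‖ = 1)
    (hf2 : ∀ z ∈ S, z.im ≠ 0 → 1 < ‖f z‖) :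
    ∃ g : ℝ → ℝ, Continuous g ∧ (∀ x : ℝ, 0 < g x) ∧ (∀ x : ℝ, g (-x) = g x) ∧
      {z : ℂ | |z.im| < g z.re} ⊆ S ∧ InjOn f {z : ℂ | |z.im| < g z.re} := by
  have injL : Set.InjOn f L := fun p hp q hq hpq => by
    have h1 : f ((p.re : ℝ) : ℂ) = f ((q.re : ℝ) : ℂ) := by
      rw [← mem_L_eq hp, ← mem_L_eq hq]; exact hpq
    have h2 := hinj p.re q.re h1
    exact Complex.ext h2 (by rw [show p.im = 0 from hp, show q.im = 0 from hq])
  -- base case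
  have hbase : ∃ p, Pred S f 0 p := by
    obtain ⟨b, hb, hQS, hinjQ⟩ := key hS hSR hf himm hinj hf1 hf2 ∅ isCompact_empty
      (Set.empty_subset S) (by rwa [Set.empty_union]) 1
    refine ⟨(b, Q 1 b), hb, hQS, ?_, ?_, isCompact_Q 1 b⟩
    · rwa [Set.empty_union] at hinjQ
    · norm_num
  -- recursion step
  have hrec : ∀ (n : ℕ) (p : ℝ × Set ℂ), Pred S f n p →
      ∃ q : ℝ × Set ℂ, Pred S f (n + 1) q ∧ q.1 ≤ p.1 ∧ p.2 ⊆ q.2 := by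
    rintro n ⟨b, V⟩ ⟨hb, hVS, hVinj, hQV, hVc⟩
    obtain ⟨b', hb', hQS', hinj'⟩ := key hS hSR hf himm hinj hf1 hf2 V hVc hVS hVinj
      ((n : ℝ) + 1 + 1)
    refine ⟨(min b' b, V ∪ Q ((n : ℝ) + 1 + 1) (min b' b)), ⟨?_, ?_, ?_, ?_, ?_⟩, ?_, ?_⟩
    · exact lt_min hb' hb
    · exact Set.union_subset hVS ((Q_mono (min_le_left _ _)).trans hQS')
    · apply hinj'.mono
      apply Set.union_subset_union_left
      exact Set.union_subset_union_right V (Q_mono (min_le_left _ _))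
    · intro u hu
      refine Or.inr ?_
      convert hu using 2
      push_cast
      ring
    · exact hVc.union (isCompact_Q _ _)
    · exact min_le_right _ _
    · exact Set.subset_union_left
  obtain ⟨p0, hp0⟩ := hbase
  have hrec' : ∀ (n : ℕ) (p : ℝ × Set ℂ), ∃ q : ℝ × Set ℂ,
      Pred S f n p → Pred S f (n + 1) q ∧ q.1 ≤ p.1 ∧ p.2 ⊆ q.2 := by
    intro n p
    by_cases h : Pred S f n p
    · exact (hrec n p h).imp fun q hq => fun _ => hq
    · exact ⟨p, fun h' => absurd h' h⟩
  choose nxt hnxt using hrec'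
  let st : ℕ → ℝ × Set ℂ := fun n => Nat.rec p0 (fun n ih => nxt n ih) n
  have hPred : ∀ n, Pred S f n (st n) := by
    intro n
    induction n with
    | zero => exact hp0
    | succ n ih => exact (hnxt n (st n) ih).1
  set b : ℕ → ℝ := fun n => (st n).1 with hbdef
  set V : ℕ → Set ℂ := fun n => (st n).2 with hVdef
  have hb : ∀ n, 0 < b n := fun n => (hPred n).1
  have hVS : ∀ n, V n ⊆ S := fun n => (hPred n).2.1
  have hVinj : ∀ n, Set.InjOn f (V n ∪ L) := fun n => (hPred n).2.2.1
  have hQV : ∀ n : ℕ, Q ((n : ℝ) + 1) (b n) ⊆ V n := fun n => (hPred n).2.2.2.1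
  have hbmono : Antitone b :=
    antitone_nat_of_succ_le fun n => (hnxt n (st n) (hPred n)).2.1
  have hVmono : Monotone V :=
    monotone_nat_of_le_succ fun n => (hnxt n (st n) (hPred n)).2.2
  -- the function g
  set g : ℝ → ℝ := fun x => ⨅ n : ℕ, (b n + max 0 ((n : ℝ) - |x|)) with hgdef
  have hbdd : ∀ x : ℝ, BddBelow (Set.range fun n : ℕ => b n + max 0 ((n : ℝ) - |x|)) := by
    intro x
    refine ⟨0, ?_⟩
    rintro _ ⟨n, rfl⟩
    have := hb n
    have := le_max_left 0 ((n : ℝ) - |x|)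
    positivity
  have glea : ∀ (x : ℝ) (n : ℕ), (n : ℝ) ≤ |x| → g x ≤ b n := by
    intro x n hn
    have h1 : g x ≤ b n + max 0 ((n : ℝ) - |x|) := ciInf_le (hbdd x) n
    rwa [max_eq_left (by linarith), add_zero] at h1
  have gpos : ∀ x : ℝ, 0 < g x := by
    intro x
    set N : ℕ := ⌊|x|⌋₊ + 1 with hN
    have hxN : |x| < (N : ℝ) := by
      rw [hN]
      push_cast
      exact Nat.lt_floor_add_one |x|
    have hlb : ∀ n : ℕ, min (b N) 1 ≤ b n + max 0 ((n : ℝ) - |x|) := by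
      intro n
      rcases le_or_gt n N with hn | hn
      · calc min (b N) 1 ≤ b N := min_le_left _ _
          _ ≤ b n := hbmono hn
          _ ≤ b n + max 0 ((n : ℝ) - |x|) := le_add_of_nonneg_right (le_max_left _ _)
      · have h1 : (N : ℝ) + 1 ≤ (n : ℝ) := by exact_mod_cast hn
        have h2 : (1 : ℝ) ≤ (n : ℝ) - |x| := by linarith
        calc min (b N) 1 ≤ 1 := min_le_right _ _
          _ ≤ max 0 ((n : ℝ) - |x|) := le_max_of_le_right h2
          _ ≤ b n + max 0 ((n : ℝ) - |x|) := le_add_of_nonneg_left (hb n).le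
    have := le_ciInf hlb
    calc (0 : ℝ) < min (b N) 1 := lt_min (hb N) one_pos
      _ ≤ g x := this
  have geven : ∀ x : ℝ, g (-x) = g x := by
    intro x
    simp only [hgdef, abs_neg]
  have glip : LipschitzWith 1 g := by
    apply LipschitzWith.of_le_add
    intro x y
    have key' : ∀ n : ℕ, b n + max 0 ((n : ℝ) - |x|) ≤
        (b n + max 0 ((n : ℝ) - |y|)) + dist x y := by
      intro n
      have h1 : |(|x|) - (|y|)| ≤ |x - y| := abs_abs_sub_abs_le_abs_sub x y
      have h2 : (n : ℝ) - |x| ≤ ((n : ℝ) - |y|) + |x - y| := by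
        have h2' : |y| - |x| ≤ |x - y| := by
          have h := abs_abs_sub_abs_le_abs_sub y x
          rw [abs_sub_comm y x] at h
          linarith [le_abs_self ((|y|) - (|x|))]
        linarith
      have h3 : (0 : ℝ) ≤ max 0 ((n : ℝ) - |y|) + |x - y| :=
        add_nonneg (le_max_left _ _) (abs_nonneg _)
      have h4 : max 0 ((n : ℝ) - |x|) ≤ max 0 ((n : ℝ) - |y|) + |x - y| := by
        apply max_le h3
        calc (n : ℝ) - |x| ≤ ((n : ℝ) - |y|) + |x - y| := h2
          _ ≤ max 0 ((n : ℝ) - |y|) + |x - y| := by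
              gcongr
              exact le_max_right _ _
      rw [Real.dist_eq]
      linarith
    have hle : g x ≤ ⨅ n : ℕ, ((b n + max 0 ((n : ℝ) - |y|)) + dist x y) :=
      le_ciInf fun n => (ciInf_le (hbdd x) n).trans (key' n)
    rw [← ciInf_add (hbdd y)] at hle
    exact hle
  -- the strip
  set T : Set ℂ := {z : ℂ | |z.im| < g z.re} with hTdef
  have memVL : ∀ z ∈ T, z ∈ V ⌊|z.re|⌋₊ ∪ L := by
    intro z hz
    by_cases him : z.im = 0
    · exact Or.inr him
    · left
      apply hQV ⌊|z.re|⌋₊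
      constructor
      · exact (Nat.lt_floor_add_one |z.re|).le
      · have h1 : |z.im| < g z.re := hz
        have h2 : g z.re ≤ b ⌊|z.re|⌋₊ := glea z.re _ (Nat.floor_le (abs_nonneg _))
        linarith
  have hTS : T ⊆ S := by
    intro z hz
    rcases memVL z hz with h | h
    · exact hVS _ h
    · rw [mem_L_eq h]
      exact hSR z.re
  refine ⟨g, glip.continuous, gpos, geven, hTS, ?_⟩
  intro z hz w hw hfzw
  set N : ℕ := max ⌊|z.re|⌋₊ ⌊|w.re|⌋₊ with hNdef
  have hzN : z ∈ V N ∪ L := by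
    rcases memVL z hz with h | h
    · exact Or.inl (hVmono (le_max_left _ _) h)
    · exact Or.inr h
  have hwN : w ∈ V N ∪ L := by
    rcases memVL w hw with h | h
    · exact Or.inl (hVmono (le_max_right _ _) h)
    · exact Or.inr h
  exact hVinj N hzN hwN hfzw
end
end
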